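/- arXiv:1406.4537 — 2 statements merged into one kernel-verified Lean document; each statement's English description precedes it below -/
import Mathlib

section
/- For every integer k ≥ 3, one has f_{[(k+2)/2]}([(k+1)/2] − 1) ≥ f_{[(k+1)/2]}([k/2]). -/
noncomputable section

open Real Filter

/-- `fseq 0 x = 1`, `fseq 1 x = 8 ^ x`, and `fseq (k+1) = fseq k ∘ fseq 1` for `k ≥ 1`. -/
noncomputable def fseq : ℕ → ℝ → ℝ
  | 0, _ => 1
  | 1, x => (8 : ℝ) ^ x
  | (k+2), x => fseq (k+1) ((8 : ℝ) ^ x)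

/-- `u₀ = 3(d-1)/(L₀ log(1/κ))`. -/
noncomputable def u0 (d : ℕ) (L₀ κ : ℝ) : ℝ := 3 * ((d : ℝ) - 1) / (L₀ * Real.log (1 / κ))

/-- `u_k = u₀ v^{-k}` with `v = 8`. -/
noncomputable def useq (d : ℕ) (L₀ κ : ℝ) (k : ℕ) : ℝ := u0 d L₀ κ / 8 ^ k

/-- The chosen scales `N_k = (α c₁/u₀) f_{[(k+2)/2]}([(k+1)/2]) / f_{[(k+1)/2]}([k/2])`,
with `α = 240`. -/
noncomputable def Nscale (c₁ u₀ : ℝ) (k : ℕ) : ℝ :=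
  (240 * c₁ / u₀) * fseq ((k+2)/2) (((k+1)/2 : ℕ) : ℝ) / fseq ((k+1)/2) ((k/2 : ℕ) : ℝ)

/-- The chosen scales `L_k = f_{[(k+1)/2]}([k/2]) (α c₁/u₀)^k L₀`. -/
noncomputable def Lscale (c₁ u₀ L₀ : ℝ) (k : ℕ) : ℝ :=
  fseq ((k+1)/2) ((k/2 : ℕ) : ℝ) * (240 * c₁ / u₀) ^ k * L₀

/-- The transversal scales `L̃_0 = L̃₀`, `L̃_{k+1} = N_k³ L̃_k`. -/
noncomputable def Ltscale (c₁ u₀ Lt₀ : ℝ) : ℕ → ℝ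
  | 0 => Lt₀
  | (k+1) => (Nscale c₁ u₀ k) ^ 3 * Ltscale c₁ u₀ Lt₀ k

/-!
For odd `k` both sides coincide. For `k = 2m` the claim reads `f_m(m) ≤ f_{m+1}(m-1)`, and
`f_{m+1}(m-1) = f_m(8^(m-1))`, so it follows from `m ≤ 8^(m-1)` and the monotonicity of `f_m`.
-/

lemma fseq_monotone : ∀ n, Monotone (fseq n)
  | 0 => monotone_const
  | 1 => fun _ _ hxy => Real.rpow_le_rpow_of_exponent_le (by norm_num) hxy
  | n + 2 => fun _ _ hxy =>
      fseq_monotone (n + 1) (Real.rpow_le_rpow_of_exponent_le (by norm_num) hxy)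

lemma succ_le_eight_pow (n : ℕ) : n + 1 ≤ 8 ^ n :=
  (Nat.lt_two_pow_self).trans_le (Nat.pow_le_pow_left (by norm_num) n)

lemma fseq_le_fseq_succ_pred (m : ℕ) : fseq m m ≤ fseq (m + 1) ((m - 1 : ℕ) : ℝ) := by
  cases m with
  | zero => simp [fseq]
  | succ n =>
    show fseq (n + 1) _ ≤ fseq (n + 1) ((8 : ℝ) ^ ((n + 1 - 1 : ℕ) : ℝ))
    apply fseq_monotone
    rw [Nat.add_sub_cancel, Real.rpow_natCast]
    exact_mod_cast succ_le_eight_pow n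

theorem fseq_shift_ge_general (k : ℕ) :
    fseq ((k + 1) / 2) ((k / 2 : ℕ) : ℝ) ≤
      fseq ((k + 2) / 2) ((((k + 1) / 2 - 1 : ℕ) : ℝ)) := by
  obtain ⟨m, rfl | rfl⟩ := Nat.even_or_odd' k
  · rw [show (2 * m + 1) / 2 = m by omega, show 2 * m / 2 = m by omega,
      show (2 * m + 2) / 2 = m + 1 by omega]
    exact fseq_le_fseq_succ_pred m
  · rw [show (2 * m + 1 + 1) / 2 = m + 1 by omega, show (2 * m + 1 + 2) / 2 = m + 1 by omega,
      show (2 * m + 1) / 2 = m by omega, Nat.add_sub_cancel]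

/-- For every integer `k ≥ 3`, `f_{[(k+2)/2]}([(k+1)/2] - 1) ≥ f_{[(k+1)/2]}([k/2])`. -/
theorem fseq_shift_ge (k : ℕ) (hk : 3 ≤ k) :
    fseq ((k + 1) / 2) ((k / 2 : ℕ) : ℝ) ≤
      fseq ((k + 2) / 2) ((((k + 1) / 2 - 1 : ℕ) : ℝ)) :=
  fseq_shift_ge_general k
end
end

section
/- There exists a constant c₇ depending only on d and κ such that whenever L₀ ≥ c₇, the chosen scales satisfy, for all k ≥ 0, N_{k+1}^{3(d−1)} · κ^{u_{k+1} L_{k+1}/3} ≤ 1. -/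
noncomputable section

open Real Filter

/-!
Write `C = α c₁/u₀ = 80 c₁ L₀ log(1/κ)/(d-1)`. Then `N_{k+1} = C · fscale (k+2) / fscale (k+1)` and
`u_{k+1} L_{k+1} log(1/κ) = 3(d-1) · fscale (k+1) · (C/8)^{k+1}`, so the claim amounts to
`3 log N_{k+1} ≤ fscale (k+1) · (C/8)^{k+1}`. The tower grows by one exponential per step,
`fscale (k+2) ≤ 8 ^ fscale (k+1)`, hence `log N_{k+1} ≤ log C + fscale (k+1) · log 8`, and both terms
are absorbed by `fscale (k+1) · C/8` as soon as `C ≥ 9216`, which holds for `L₀ ≥ 120(d-1)/log(1/κ)`.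
-/

lemma fseq_mono : ∀ k : ℕ, Monotone (fseq k)
  | 0 => monotone_const
  | 1 => fun _ _ h => rpow_le_rpow_of_exponent_le (by norm_num) h
  | (k + 2) => fun _ _ h => fseq_mono (k + 1) (rpow_le_rpow_of_exponent_le (by norm_num) h)

lemma one_le_fseq : ∀ (k : ℕ) {x : ℝ}, 0 ≤ x → 1 ≤ fseq k x
  | 0, _, _ => le_rfl
  | 1, _, hx => one_le_rpow (by norm_num) hx
  | (k + 2), _, _ => one_le_fseq (k + 1) (rpow_nonneg (by norm_num) _)

lemma fseq_eight_rpow : ∀ {k : ℕ}, k ≠ 0 → ∀ x : ℝ, fseq k ((8 : ℝ) ^ x) = (8 : ℝ) ^ fseq k x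
  | 0, h, _ => absurd rfl h
  | 1, _, _ => rfl
  | (k + 2), _, x => fseq_eight_rpow k.succ_ne_zero ((8 : ℝ) ^ x)

lemma add_one_le_rpow {b x : ℝ} (hb : exp 1 ≤ b) (hx : 0 ≤ x) : x + 1 ≤ b ^ x := by
  have hb0 : 0 < b := (exp_pos 1).trans_le hb
  have hlog : 1 ≤ log b := (le_log_iff_exp_le hb0).2 hb
  rw [rpow_def_of_pos hb0]
  nlinarith [add_one_le_exp (log b * x)]

lemma fseq_add_one_le {k : ℕ} (hk : k ≠ 0) {x : ℝ} (hx : 0 ≤ x) :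
    fseq k (x + 1) ≤ (8 : ℝ) ^ fseq k x := by
  have h8 : exp 1 ≤ 8 := exp_one_lt_d9.le.trans (by norm_num)
  rw [← fseq_eight_rpow hk]
  exact fseq_mono k (add_one_le_rpow h8 hx)

def fscale (m : ℕ) : ℝ := fseq ((m + 1) / 2) ((m / 2 : ℕ) : ℝ)

lemma one_le_fscale (m : ℕ) : 1 ≤ fscale m := one_le_fseq _ (Nat.cast_nonneg _)

lemma fscale_succ_succ_le (m : ℕ) : fscale (m + 2) ≤ (8 : ℝ) ^ fscale (m + 1) := by
  rcases Nat.even_or_odd' m with ⟨j, rfl | rfl⟩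
  · have h₁ : (2 * j + 2 + 1) / 2 = j + 1 := by omega
    have h₂ : (2 * j + 2) / 2 = j + 1 := by omega
    have h₃ : (2 * j + 1) / 2 = j := by omega
    simp only [fscale, h₁, h₂, h₃, Nat.cast_add, Nat.cast_one]
    exact fseq_add_one_le j.succ_ne_zero (Nat.cast_nonneg j)
  · have h₁ : (2 * j + 1 + 2 + 1) / 2 = j + 1 + 1 := by omega
    have h₂ : (2 * j + 1 + 2) / 2 = j + 1 := by omega
    have h₃ : (2 * j + 1 + 1) / 2 = j + 1 := by omega
    simp only [fscale, h₁, h₂, h₃]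
    exact (fseq_eight_rpow j.succ_ne_zero _).le

lemma log_fscale_succ_succ_le (m : ℕ) : log (fscale (m + 2)) ≤ fscale (m + 1) * log 8 := by
  rw [← log_rpow (by norm_num)]
  exact log_le_log (by linarith [one_le_fscale (m + 2)]) (fscale_succ_succ_le m)

lemma three_mul_log_le {C : ℝ} (hC : 9216 ≤ C) : 3 * log C ≤ C / 16 := by
  have hsqrt : 96 ≤ √C := le_sqrt_of_sq_le (by linarith)
  have hlog : log C = 2 * log √C := by
    rw [log_sqrt (by linarith)]; ring
  have := log_le_sub_one_of_pos (show 0 < √C by linarith)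
  nlinarith [mul_self_sqrt (show 0 ≤ C by linarith)]

lemma three_mul_log_div_le {C a b : ℝ} (hC : 9216 ≤ C) (ha : 1 ≤ a) (hb : 1 ≤ b)
    (hba : log b ≤ a * log 8) {n : ℕ} (hn : n ≠ 0) : 3 * log (C * b / a) ≤ a * (C / 8) ^ n := by
  have hlog8 : log 8 ≤ 7 := by linarith [log_le_sub_one_of_pos (show (0 : ℝ) < 8 by norm_num)]
  rw [log_div (by positivity) (by positivity), log_mul (by positivity) (by positivity)]
  calc 3 * (log C + log b - log a) ≤ C / 16 + a * 21 := by
        nlinarith [three_mul_log_le hC, log_nonneg ha]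
    _ ≤ a * (C / 8) := by nlinarith
    _ ≤ a * (C / 8) ^ n :=
        mul_le_mul_of_nonneg_left (le_self_pow₀ (by linarith) hn) (by linarith)

lemma pow_mul_rpow_le_one {N κ E : ℝ} {m : ℕ} (hN : 0 < N) (hκ : 0 < κ)
    (h : m * log N ≤ E * log (1 / κ)) : N ^ m * κ ^ E ≤ 1 := by
  rw [← exp_log (pow_pos hN m), log_pow, rpow_def_of_pos hκ, ← exp_add, exp_le_one_iff]
  rw [one_div, log_inv] at h
  linarith

lemma useq_mul_Lscale (d : ℕ) (L κ c : ℝ) (n : ℕ) :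
    useq d L κ n * Lscale c (u0 d L κ) L n =
      u0 d L κ * L * fscale n * (240 * c / u0 d L κ / 8) ^ n := by
  simp only [useq, Lscale, fscale, div_pow]
  ring

lemma u0_mul_mul_log {d : ℕ} {L κ : ℝ} (hL : L ≠ 0) (hκ : log (1 / κ) ≠ 0) :
    u0 d L κ * L * log (1 / κ) = 3 * (d - 1) := by
  unfold u0; field_simp

lemma div_u0_eq (d : ℕ) (L κ c : ℝ) :
    240 * c / u0 d L κ = 80 * c * (L * log (1 / κ)) / (d - 1) := by
  unfold u0; rw [div_div_eq_mul_div, mul_comm 3, ← div_div]; ring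

/-- There is a constant `c₇ = c₇(d,κ)` such that for `L₀ ≥ c₇` the chosen scales satisfy
`N_{k+1}^{3(d-1)} κ^{u_{k+1} L_{k+1}/3} ≤ 1` for all `k ≥ 0`. -/
theorem Nscale_kappa_bound (d : ℕ) (hd : 2 ≤ d) (κ : ℝ) (hκ0 : 0 < κ) (hκ1 : κ < 1) :
    ∃ c₇ : ℝ, ∀ L₀ : ℝ, c₇ ≤ L₀ → ∀ k : ℕ,
      (Nscale (Real.sqrt d) (u0 d L₀ κ) (k + 1)) ^ (3 * (d - 1)) *
          κ ^ (useq d L₀ κ (k + 1) * Lscale (Real.sqrt d) (u0 d L₀ κ) L₀ (k + 1) / 3) ≤ 1 := by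
  have hD : (0 : ℝ) < d - 1 := by
    have : (2 : ℝ) ≤ d := by exact_mod_cast hd
    linarith
  have hΛ : 0 < log (1 / κ) := log_pos ((one_lt_div hκ0).2 hκ1)
  refine ⟨120 * (d - 1) / log (1 / κ), fun L₀ hL₀ k => ?_⟩
  have hL₀Λ : 120 * (d - 1) ≤ L₀ * log (1 / κ) := (div_le_iff₀ hΛ).1 hL₀
  have hL₀ : 0 < L₀ := pos_of_mul_pos_left (by linarith) hΛ.le
  set C := 240 * √d / u0 d L₀ κ with hCdef
  have hC : 9216 ≤ C := by
    have hd1 : 1 ≤ √d := one_le_sqrt.2 (by exact_mod_cast (by omega : 1 ≤ d))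
    rw [hCdef, div_u0_eq, le_div_iff₀ hD]
    nlinarith [mul_le_mul_of_nonneg_right hd1 (by positivity : 0 ≤ L₀ * log (1 / κ))]
  have hF₁ := one_le_fscale (k + 1)
  have hF₂ := one_le_fscale (k + 2)
  have hlogN := three_mul_log_div_le hC hF₁ hF₂ (log_fscale_succ_succ_le k) k.add_one_ne_zero
  have hN : Nscale √d (u0 d L₀ κ) (k + 1) = C * fscale (k + 2) / fscale (k + 1) := rfl
  refine pow_mul_rpow_le_one (by rw [hN]; positivity) hκ0 ?_
  rw [useq_mul_Lscale, hN, Nat.cast_mul, Nat.cast_sub (by omega)]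
  calc ((3 : ℕ) : ℝ) * ((d : ℝ) - (1 : ℕ)) * log (C * fscale (k + 2) / fscale (k + 1))
      ≤ (d - 1) * (fscale (k + 1) * (C / 8) ^ (k + 1)) := by
        push_cast; nlinarith [mul_le_mul_of_nonneg_left hlogN hD.le]
    _ = u0 d L₀ κ * L₀ * log (1 / κ) * (fscale (k + 1) * (C / 8) ^ (k + 1)) / 3 := by
        rw [u0_mul_mul_log hL₀.ne' hΛ.ne']; ring
    _ = u0 d L₀ κ * L₀ * fscale (k + 1) * (C / 8) ^ (k + 1) / 3 * log (1 / κ) := by ring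
end
end
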